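/- Let S be a blocking semioval with exactly 25 points in PG(2,11) such that no line meets S in more than 6 points. Suppose Q and R are distinct points of S each lying on exactly three 6-secants to S, with the line n through Q and R a 6-secant; let ℓ1, ℓ2 be the other two 6-secants through Q, let m1, m2 be the other two 6-secants through R, let I be the set of four intersection points ℓ_i ∩ m_j for i,j ∈ {1,2}, and let S* be the set of points of S lying on at least one of the lines n, ℓ1, ℓ2, m1, m2. If exactly three points of I lie in S, then there exists a point P ∈ S \ S* lying on at least two 6-secants to S such that neither of these two 6-secants contains any point of S \ S* other than P. -/

import Mathlib

instance : Fact (Nat.Prime 11) := ⟨by norm_num⟩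

/-- The points of `PG(2,11)`: the projectivization of `(ZMod 11)^3`. -/
abbrev PGPoint : Type := Projectivization (ZMod 11) (Fin 3 → ZMod 11)

/-- The lines of `PG(2,11)`: the 2-dimensional subspaces of `(ZMod 11)^3`. -/
abbrev PGLine : Type :=
  {W : Submodule (ZMod 11) (Fin 3 → ZMod 11) // Module.finrank (ZMod 11) W = 2}

/-- Incidence: a point lies on a line when its representing 1-dimensional
subspace is contained in the line's 2-dimensional subspace. -/
def PGmem (P : PGPoint) (L : PGLine) : Prop := Projectivization.submodule P ≤ L.val

/-- The set of points lying on a line. -/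
def linePts (L : PGLine) : Set PGPoint := {P | PGmem P L}

/-- The set of points of `S` lying on the line `L`. -/
def secantPts (S : Set PGPoint) (L : PGLine) : Set PGPoint := {P ∈ S | PGmem P L}

/-- A line is a `k`-secant to `S` if it meets `S` in exactly `k` points. -/
def IsSecant (S : Set PGPoint) (k : ℕ) (L : PGLine) : Prop := (secantPts S L).ncard = k

/-- A tangent line to `S` is a 1-secant. -/
def IsTangent (S : Set PGPoint) (L : PGLine) : Prop := IsSecant S 1 L

/-- A blocking set: every line meets `S`, but `S` contains no line. -/
def IsBlockingSet (S : Set PGPoint) : Prop :=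
  (∀ L : PGLine, (secantPts S L).Nonempty) ∧ ∀ L : PGLine, ¬ linePts L ⊆ S

/-- A semioval: every point of `S` lies on exactly one tangent line to `S`. -/
def IsSemioval (S : Set PGPoint) : Prop :=
  ∀ P ∈ S, ∃! L : PGLine, PGmem P L ∧ IsTangent S L

/-- A blocking semioval is both a blocking set and a semioval. -/
def IsBlockingSemioval (S : Set PGPoint) : Prop := IsBlockingSet S ∧ IsSemioval S


/-!
Counting flags and pairs of points shows that the numbers `t k` of `k`-secants of a blocking
semioval `S` with 25 points and no 7-secant satisfy `∑ t k = 133`, `∑ k t k = 300`,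
`∑ k (k - 1) t k = 600` and `t 1 = 25`, which forces `t 6 ≥ 9`.

The lines `n, l₁, l₂` form a pencil at `Q` and `m₁, m₂` a pencil at `R`; each `mⱼ` meets the first
pencil inside `S` only in `R` and the points of `I ∩ S` on it. Hence `|S*| = 16 + 5 + 5 - 3 = 23`
and `S \ S* = {P, P'}`. Any further 6-secant meets each of the five lines in at most one point,
so it has at most five points in `S*` and passes through `P` or `P'`. At most one line joins
`P` and `P'`, so of the at least four further 6-secants, two pass through the same one of
`P, P'` and miss the other.
-/

open Projectivization Finset
open scoped LinearAlgebra.Projectivization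

namespace Projectivization

variable {K V : Type*} [DivisionRing K] [AddCommGroup V] [Module K V]

lemma card_subtype_submodule_le_of_finrank_eq_two [Finite K] {W : Submodule K V}
    (hW : Module.finrank K W = 2) :
    Nat.card {P : ℙ K V // P.submodule ≤ W} = Nat.card K + 1 := by
  rw [← card_of_finrank_two K W hW]
  symm
  refine Nat.card_eq_of_bijective
    (fun p => ⟨map W.subtype W.injective_subtype p, ?_⟩) ⟨fun p q h => ?_, fun P => ?_⟩
  · induction p using ind with | h v hv =>
    simp [map_mk, submodule_mk, Submodule.span_singleton_le_iff_mem]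
  · exact map_injective _ W.injective_subtype (congrArg Subtype.val h)
  · have hP : P.1.rep ∈ W := P.2 (by rw [submodule_eq]; exact Submodule.mem_span_singleton_self _)
    refine ⟨mk K ⟨P.1.rep, hP⟩ (by simpa using P.1.rep_nonzero), Subtype.ext ?_⟩
    simp [map_mk, mk_rep]

end Projectivization

instance : Finite PGLine :=
  Subtype.finite (α := Submodule (ZMod 11) (Fin 3 → ZMod 11))

noncomputable instance : Fintype PGPoint := Fintype.ofFinite _

noncomputable instance : Fintype PGLine := Fintype.ofFinite _

open Classical

lemma exists_PGmem_PGmem {P Q : PGPoint} (hPQ : P ≠ Q) : ∃ L : PGLine, PGmem P L ∧ PGmem Q L := by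
  have hind := linearIndependent_pair_iff_ne.2 hPQ
  refine ⟨⟨_, (finrank_span_eq_card hind).trans (Fintype.card_fin 2)⟩, ?_, ?_⟩ <;>
  · rw [PGmem, submodule_eq, Submodule.span_singleton_le_iff_mem]
    exact Submodule.subset_span (by simp)

lemma PGLine.eq_of_PGmem {P Q : PGPoint} {L M : PGLine} (hPQ : P ≠ Q)
    (hPL : PGmem P L) (hQL : PGmem Q L) (hPM : PGmem P M) (hQM : PGmem Q M) : L = M := by
  simp only [PGmem, ← Submodule.mem_projectivization_iff_submodule_le] at hPL hQL hPM hQM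
  exact Subtype.ext (line_unique hPQ _ _ L.2 M.2 hPL hQL hPM hQM)

lemma PGPoint.eq_of_PGmem {P Q : PGPoint} {L M : PGLine} (hLM : L ≠ M)
    (hPL : PGmem P L) (hPM : PGmem P M) (hQL : PGmem Q L) (hQM : PGmem Q M) : P = Q := by
  by_contra hPQ
  exact hLM (PGLine.eq_of_PGmem hPQ hPL hQL hPM hQM)

lemma card_PGPoint : Fintype.card PGPoint = 133 := by
  rw [Fintype.card_eq_nat_card, card_of_finrank (ZMod 11) _ (Module.finrank_fin_fun _)]
  simp [sum_range_succ]

lemma card_points_on (L : PGLine) : #{P | PGmem P L} = 12 := by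
  rw [← Fintype.card_subtype, Fintype.card_eq_nat_card]
  exact (card_subtype_submodule_le_of_finrank_eq_two L.2).trans (by simp)

/-- `X ↦ PX` maps the 132 points other than `P` onto the lines through `P`, with fibres of
size 11. -/
lemma card_lines_through (P : PGPoint) : #{L | PGmem P L} = 12 := by
  have := Fintype.one_lt_card_iff_nontrivial.1 (by rw [card_PGPoint]; norm_num)
  obtain ⟨X₀, hX₀⟩ := exists_ne P
  have : Nonempty PGLine := ⟨(exists_PGmem_PGmem hX₀).choose⟩
  choose! line hline using fun X (hX : X ≠ P) => exists_PGmem_PGmem hX.symm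
  have hmaps : ∀ X ∈ univ.erase P, line X ∈ ({L | PGmem P L} : Finset PGLine) := fun X hX =>
    mem_filter.2 ⟨mem_univ _, (hline X (ne_of_mem_erase hX)).1⟩
  have hfiber : ∀ L ∈ ({L | PGmem P L} : Finset PGLine),
      #{X ∈ univ.erase P | line X = L} = 11 := by
    intro L hL
    have : ({X ∈ univ.erase P | line X = L} : Finset PGPoint) =
        ({X | PGmem X L} : Finset PGPoint).erase P := by
      ext X
      simp only [mem_filter, mem_erase, mem_univ, and_true, true_and]
      constructor
      · rintro ⟨hXP, rfl⟩
        exact ⟨hXP, (hline X hXP).2⟩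
      · rintro ⟨hXP, hXL⟩
        exact ⟨hXP, PGLine.eq_of_PGmem hXP.symm (hline X hXP).1 (hline X hXP).2
          (mem_filter.1 hL).2 hXL⟩
    rw [this, card_erase_of_mem (by simpa using hL), card_points_on]
  have := card_eq_sum_card_fiberwise hmaps
  rw [sum_congr rfl hfiber, sum_const, smul_eq_mul, card_erase_of_mem (mem_univ _), card_univ,
    card_PGPoint] at this
  omega

lemma card_PGLine : Fintype.card PGLine = 133 := by
  have := sum_card_bipartiteAbove_eq_sum_card_bipartiteBelow PGmem (s := univ) (t := univ)
  simp only [bipartiteAbove, bipartiteBelow, card_lines_through, card_points_on, sum_const,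
    card_univ, card_PGPoint, smul_eq_mul] at this
  omega

noncomputable def meet (F : Finset PGPoint) (L : PGLine) : Finset PGPoint := {P ∈ F | PGmem P L}

@[simp]
lemma mem_meet {F : Finset PGPoint} {L : PGLine} {P : PGPoint} :
    P ∈ meet F L ↔ P ∈ F ∧ PGmem P L :=
  mem_filter

lemma meet_subset (F : Finset PGPoint) (L : PGLine) : meet F L ⊆ F :=
  filter_subset _ _

lemma secantPts_coe (F : Finset PGPoint) (L : PGLine) : secantPts ↑F L = ↑(meet F L) := by
  ext P
  simp [secantPts]

lemma isSecant_coe_iff {F : Finset PGPoint} {k : ℕ} {L : PGLine} :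
    IsSecant ↑F k L ↔ #(meet F L) = k := by
  rw [IsSecant, secantPts_coe, Set.ncard_coe_finset]

lemma card_lines_through_two {P Q : PGPoint} (hPQ : P ≠ Q) :
    #{L | PGmem P L ∧ PGmem Q L} = 1 := by
  rw [← Fintype.existsUnique_iff_card_one]
  obtain ⟨L, hL⟩ := exists_PGmem_PGmem hPQ
  exact ⟨L, hL, fun M hM => PGLine.eq_of_PGmem hPQ hM.1 hM.2 hL.1 hL.2⟩

section Counting

variable (F : Finset PGPoint)

lemma sum_card_meet : ∑ L, #(meet F L) = 12 * #F := by
  have := sum_card_bipartiteAbove_eq_sum_card_bipartiteBelow PGmem (s := F) (t := univ)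
  simp only [bipartiteAbove, card_lines_through, sum_const, smul_eq_mul] at this
  rw [mul_comm, this]
  rfl

lemma sum_card_meet_mul_pred : ∑ L, #(meet F L) * (#(meet F L) - 1) = #F * (#F - 1) := by
  have := sum_card_bipartiteAbove_eq_sum_card_bipartiteBelow
    (fun p L => PGmem p.1 L ∧ PGmem p.2 L) (s := F.offDiag) (t := univ)
  have hpairs : ∀ p ∈ F.offDiag, #{L | PGmem p.1 L ∧ PGmem p.2 L} = 1 := fun p hp =>
    card_lines_through_two (mem_offDiag.1 hp).2.2
  have hmeet : ∀ L, ({p ∈ F.offDiag | PGmem p.1 L ∧ PGmem p.2 L} : Finset _) =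
      (meet F L).offDiag := by
    intro L
    ext p
    simp only [mem_filter, mem_offDiag, mem_meet]
    tauto
  simp only [bipartiteAbove, bipartiteBelow, sum_congr rfl hpairs, hmeet, offDiag_card,
    sum_const, smul_eq_mul, mul_one] at this
  simp only [Nat.mul_sub_one, this]

lemma card_tangents_of_isSemioval (hF : IsSemioval ↑F) : #{L | #(meet F L) = 1} = #F := by
  have := sum_card_bipartiteAbove_eq_sum_card_bipartiteBelow PGmem (s := F)
    (t := {L | #(meet F L) = 1})
  have htangent : ∀ P ∈ F, #(bipartiteAbove PGmem {L | #(meet F L) = 1} P) = 1 := by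
    intro P hP
    simp only [bipartiteAbove, filter_filter, ← Fintype.existsUnique_iff_card_one]
    simpa [IsTangent, isSecant_coe_iff, and_comm] using hF P hP
  have hpoint : ∀ L ∈ ({L | #(meet F L) = 1} : Finset PGLine), #(bipartiteBelow PGmem F L) = 1 :=
    fun L hL => (mem_filter.1 hL).2
  rw [sum_congr rfl htangent, sum_congr rfl hpoint] at this
  simpa using this.symm

end Counting

/-- With `t k` the number of `i` with `s i = k`, the hypotheses give
`∑ (k - 2) (k - 5) t k = 30`, i.e. `4 t 6 = 30 + 2 t 3 + 2 t 4`; integrality rules out `t 6 = 8`. -/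
lemma nine_le_card_eq_six {ι : Type*} [Fintype ι] (s : ι → ℕ) (hcard : Fintype.card ι = 133)
    (hpos : ∀ i, 1 ≤ s i) (hle : ∀ i, s i ≤ 6) (hsum : ∑ i, s i = 300)
    (hsum₂ : ∑ i, s i * (s i - 1) = 600) (hone : #{i | s i = 1} = 25) :
    9 ≤ #{i | s i = 6} := by
  have hfiber : ∀ g : ℕ → ℕ, ∑ i, g (s i) = ∑ k ∈ range 7, g k * #{i | s i = k} := by
    intro g
    rw [← sum_fiberwise_of_maps_to (g := s) (t := range 7)
      (fun i _ => mem_range.2 (Nat.lt_succ_of_le (hle i)))]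
    refine sum_congr rfl fun k _ => ?_
    rw [sum_congr rfl fun i hi => by rw [(mem_filter.1 hi).2], sum_const, smul_eq_mul, mul_comm]
  have hzero : #{i | s i = 0} = 0 := card_eq_zero.2 (filter_eq_empty_iff.2 fun i _ => by
    have := hpos i; omega)
  have h₀ := hfiber fun _ => 1
  have h₁ := hfiber id
  have h₂ := hfiber fun k => k * (k - 1)
  simp only [sum_const, card_univ, hcard, smul_eq_mul, mul_one, id, sum_range_succ,
    sum_range_zero] at h₀ h₁ h₂
  omega

lemma nine_le_card_six_secants {F : Finset PGPoint} (hcard : #F = 25)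
    (hblock : ∀ L, (meet F L).Nonempty) (hsemi : IsSemioval ↑F) (hmax : ∀ L, #(meet F L) ≤ 6) :
    9 ≤ #{L | #(meet F L) = 6} :=
  nine_le_card_eq_six (fun L => #(meet F L)) card_PGLine (fun L => (hblock L).card_pos) hmax
    (by rw [sum_card_meet, hcard]) (by rw [sum_card_meet_mul_pred, hcard])
    (by rw [card_tangents_of_isSemioval F hsemi, hcard])

section Configuration

variable {F : Finset PGPoint}

lemma card_meet_inter_meet_le_one {L M : PGLine} (hLM : L ≠ M) : #(meet F L ∩ meet F M) ≤ 1 :=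
  card_le_one.2 fun P hP Q hQ => by
    simp only [mem_inter, mem_meet] at hP hQ
    exact PGPoint.eq_of_PGmem hLM hP.1.2 hP.2.2 hQ.1.2 hQ.2.2

lemma card_meet_le_of_subset_biUnion {Ls : Finset PGLine} {L : PGLine} (hL : L ∉ Ls)
    (h : meet F L ⊆ Ls.biUnion (meet F)) : #(meet F L) ≤ #Ls :=
  calc #(meet F L) = #(Ls.biUnion fun M => meet F L ∩ meet F M) := by
        rw [← inter_biUnion, inter_eq_left.2 h]
    _ ≤ ∑ M ∈ Ls, #(meet F L ∩ meet F M) := card_biUnion_le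
    _ ≤ ∑ _M ∈ Ls, 1 :=
        sum_le_sum fun M hM => card_meet_inter_meet_le_one fun hLM => hL (hLM ▸ hM)
    _ = #Ls := by rw [sum_const, smul_eq_mul, mul_one]

lemma exists_two_secants_missing_of_two_le_card {k : ℕ} {Z Z' : PGPoint}
    (h : 2 ≤ #{L | #(meet F L) = k ∧ PGmem Z L ∧ ¬PGmem Z' L}) :
    ∃ t₁ t₂ : PGLine, t₁ ≠ t₂ ∧ PGmem Z t₁ ∧ PGmem Z t₂ ∧ #(meet F t₁) = k ∧ #(meet F t₂) = k ∧
      (∀ X ∈ ({Z, Z'} : Finset PGPoint), PGmem X t₁ → X = Z) ∧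
      (∀ X ∈ ({Z, Z'} : Finset PGPoint), PGmem X t₂ → X = Z) := by
  obtain ⟨t₁, ht₁, t₂, ht₂, ht₁₂⟩ := one_lt_card.1 h
  simp only [mem_filter, mem_univ, true_and] at ht₁ ht₂
  have hsolo : ∀ t, ¬PGmem Z' t → ∀ X ∈ ({Z, Z'} : Finset PGPoint), PGmem X t → X = Z := by
    intro t ht X hX hXt
    rw [mem_insert, mem_singleton] at hX
    exact hX.resolve_right fun h => ht (h ▸ hXt)
  exact ⟨t₁, t₂, ht₁₂, ht₁.2.1, ht₂.2.1, ht₁.1, ht₂.1, hsolo t₁ ht₁.2.2, hsolo t₂ ht₂.2.2⟩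

lemma exists_mem_pair_two_secants_missing_other {Ls : Finset PGLine} {k : ℕ} {P P' : PGPoint}
    (hPP' : P ≠ P') (hout : F \ Ls.biUnion (meet F) = {P, P'}) (hk : #Ls < k)
    (hcount : #Ls + 4 ≤ #{L | #(meet F L) = k}) :
    ∃ Z ∈ ({P, P'} : Finset PGPoint), ∃ t₁ t₂ : PGLine, t₁ ≠ t₂ ∧ PGmem Z t₁ ∧ PGmem Z t₂ ∧
      #(meet F t₁) = k ∧ #(meet F t₂) = k ∧
      (∀ X ∈ ({P, P'} : Finset PGPoint), PGmem X t₁ → X = Z) ∧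
      (∀ X ∈ ({P, P'} : Finset PGPoint), PGmem X t₂ → X = Z) := by
  have hthrough : ∀ L, #(meet F L) = k → L ∉ Ls → PGmem P L ∨ PGmem P' L := by
    intro L hL hLs
    by_contra! hL'
    refine (card_meet_le_of_subset_biUnion hLs fun X hX => ?_).not_gt (hL ▸ hk)
    by_contra hXU
    have hX' : X ∈ F \ Ls.biUnion (meet F) := mem_sdiff.2 ⟨(mem_meet.1 hX).1, hXU⟩
    rw [hout, mem_insert, mem_singleton] at hX'
    rcases hX' with rfl | rfl
    exacts [hL'.1 (mem_meet.1 hX).2, hL'.2 (mem_meet.1 hX).2]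
  set only : PGPoint → PGPoint → Finset PGLine :=
    fun Z Z' => {L | #(meet F L) = k ∧ PGmem Z L ∧ ¬PGmem Z' L}
  set both : Finset PGLine := {L | PGmem P L ∧ PGmem P' L}
  have hcover : ({L | #(meet F L) = k} : Finset PGLine) ⊆ Ls ∪ only P P' ∪ only P' P ∪ both := by
    intro L hL
    have hL := (mem_filter.1 hL).2
    have := hthrough L hL
    simp only [only, both, mem_union, mem_filter, mem_univ, true_and]
    tauto
  have hboth : #both ≤ 1 := card_le_one.2 fun L hL M hM => by
    simp only [both, mem_filter, mem_univ, true_and] at hL hM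
    exact PGLine.eq_of_PGmem hPP' hL.1 hL.2 hM.1 hM.2
  have hsplit : #Ls + 4 ≤ #Ls + #(only P P') + #(only P' P) + 1 :=
    calc #Ls + 4 ≤ #{L | #(meet F L) = k} := hcount
      _ ≤ #(Ls ∪ only P P' ∪ only P' P ∪ both) := card_le_card hcover
      _ ≤ #Ls + #(only P P') + #(only P' P) + #both := by
        grw [card_union_le, card_union_le, card_union_le]
      _ ≤ _ := by grw [hboth]
  rcases le_or_gt 2 #(only P P') with h | h
  · exact ⟨P, by simp, exists_two_secants_missing_of_two_le_card h⟩
  · have h' : 2 ≤ #(only P' P) := by omega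
    exact ⟨P', by simp, pair_comm P P' ▸ exists_two_secants_missing_of_two_le_card h'⟩

end Configuration

section Pencils

variable {F : Finset PGPoint} {Q R A B C D : PGPoint} {n l₁ l₂ m₁ m₂ : PGLine}

lemma meet_inter_meet_of_PGmem {L M : PGLine} (hQ : Q ∈ F) (hQL : PGmem Q L) (hQM : PGmem Q M)
    (hLM : L ≠ M) : meet F L ∩ meet F M = {Q} := by
  ext P
  simp only [mem_inter, mem_meet, mem_singleton]
  constructor
  · rintro ⟨⟨-, hPL⟩, -, hPM⟩
    exact PGPoint.eq_of_PGmem hLM hPL hPM hQL hQM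
  · rintro rfl
    exact ⟨⟨hQ, hQL⟩, hQ, hQM⟩

lemma card_meet_union_meet_add_one {L M : PGLine} (hQ : Q ∈ F) (hQL : PGmem Q L)
    (hQM : PGmem Q M) (hLM : L ≠ M) :
    #(meet F L ∪ meet F M) + 1 = #(meet F L) + #(meet F M) := by
  rw [← card_union_add_card_inter, meet_inter_meet_of_PGmem hQ hQL hQM hLM, card_singleton]

lemma card_meet_union_meet_union_meet_add_two {L M N : PGLine} (hQ : Q ∈ F) (hQL : PGmem Q L)
    (hQM : PGmem Q M) (hQN : PGmem Q N) (hLM : L ≠ M) (hLN : L ≠ N) (hMN : M ≠ N) :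
    #(meet F L ∪ meet F M ∪ meet F N) + 2 = #(meet F L) + #(meet F M) + #(meet F N) := by
  have hinter : (meet F L ∪ meet F M) ∩ meet F N = {Q} := by
    rw [union_inter_distrib_right, meet_inter_meet_of_PGmem hQ hQL hQN hLN,
      meet_inter_meet_of_PGmem hQ hQM hQN hMN, union_self]
  have := card_union_add_card_inter (meet F L ∪ meet F M) (meet F N)
  rw [hinter, card_singleton] at this
  have := card_meet_union_meet_add_one hQ hQL hQM hLM
  omega

lemma meet_pencil_inter_meet_pencil (hR : R ∈ F) (hQR : Q ≠ R) (hn : PGmem Q n ∧ PGmem R n)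
    (hl₁ : PGmem Q l₁) (hl₂ : PGmem Q l₂) (hm₁ : PGmem R m₁) (hm₂ : PGmem R m₂)
    (hl₁n : l₁ ≠ n) (hl₂n : l₂ ≠ n) (hm₁n : m₁ ≠ n) (hm₂n : m₂ ≠ n)
    (hA : PGmem A l₁ ∧ PGmem A m₁) (hB : PGmem B l₁ ∧ PGmem B m₂)
    (hC : PGmem C l₂ ∧ PGmem C m₁) (hD : PGmem D l₂ ∧ PGmem D m₂) :
    (meet F n ∪ meet F l₁ ∪ meet F l₂) ∩ (meet F m₁ ∪ meet F m₂) = insert R ({A, B, C, D} ∩ F) := by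
  have hlm : ∀ {l m}, PGmem Q l → PGmem R m → l ≠ n → l ≠ m := fun hl hm hln hlm =>
    hln (PGLine.eq_of_PGmem hQR hl (hlm ▸ hm) hn.1 hn.2)
  ext X
  simp only [mem_inter, mem_union, mem_meet, mem_insert, mem_singleton]
  constructor
  · rintro ⟨((⟨hX, hXn⟩ | ⟨hX, hXl⟩) | ⟨hX, hXl⟩), (⟨-, hXm⟩ | ⟨-, hXm⟩)⟩
    · exact .inl (PGPoint.eq_of_PGmem hm₁n.symm hXn hXm hn.2 hm₁)
    · exact .inl (PGPoint.eq_of_PGmem hm₂n.symm hXn hXm hn.2 hm₂)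
    · exact .inr ⟨.inl (PGPoint.eq_of_PGmem (hlm hl₁ hm₁ hl₁n) hXl hXm hA.1 hA.2), hX⟩
    · exact .inr ⟨.inr (.inl (PGPoint.eq_of_PGmem (hlm hl₁ hm₂ hl₁n) hXl hXm hB.1 hB.2)), hX⟩
    · exact .inr ⟨.inr (.inr (.inl (PGPoint.eq_of_PGmem (hlm hl₂ hm₁ hl₂n) hXl hXm hC.1 hC.2))), hX⟩
    · exact .inr ⟨.inr (.inr (.inr (PGPoint.eq_of_PGmem (hlm hl₂ hm₂ hl₂n) hXl hXm hD.1 hD.2))), hX⟩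
  · rintro (rfl | ⟨rfl | rfl | rfl | rfl, hX⟩) <;> simp_all

lemma card_biUnion_meet_five_lines (hQ : Q ∈ F) (hR : R ∈ F) (hQR : Q ≠ R)
    (hn : PGmem Q n ∧ PGmem R n) (hl₁ : PGmem Q l₁) (hl₂ : PGmem Q l₂) (hm₁ : PGmem R m₁)
    (hm₂ : PGmem R m₂) (hl₁₂ : l₁ ≠ l₂) (hl₁n : l₁ ≠ n) (hl₂n : l₂ ≠ n) (hm₁₂ : m₁ ≠ m₂)
    (hm₁n : m₁ ≠ n) (hm₂n : m₂ ≠ n)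
    (hA : PGmem A l₁ ∧ PGmem A m₁) (hB : PGmem B l₁ ∧ PGmem B m₂)
    (hC : PGmem C l₂ ∧ PGmem C m₁) (hD : PGmem D l₂ ∧ PGmem D m₂) :
    #(({n, l₁, l₂, m₁, m₂} : Finset PGLine).biUnion (meet F)) + #({A, B, C, D} ∩ F) + 4 =
      #(meet F n) + #(meet F l₁) + #(meet F l₂) + #(meet F m₁) + #(meet F m₂) := by
  have hR_off : ∀ {X l}, PGmem Q l → l ≠ n → PGmem X l → R ≠ X := fun hl hln hX hRX =>
    hln (PGLine.eq_of_PGmem hQR hl (hRX ▸ hX) hn.1 hn.2)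
  have hRI : R ∉ ({A, B, C, D} ∩ F : Finset PGPoint) := by
    simp only [mem_inter, mem_insert, mem_singleton, not_and]
    rintro (h | h | h | h) -
    exacts [hR_off hl₁ hl₁n hA.1 h, hR_off hl₁ hl₁n hB.1 h, hR_off hl₂ hl₂n hC.1 h,
      hR_off hl₂ hl₂n hD.1 h]
  have hU : ({n, l₁, l₂, m₁, m₂} : Finset PGLine).biUnion (meet F) =
      meet F n ∪ meet F l₁ ∪ meet F l₂ ∪ (meet F m₁ ∪ meet F m₂) := by
    simp only [biUnion_insert, singleton_biUnion, union_assoc]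
  have := card_union_add_card_inter (meet F n ∪ meet F l₁ ∪ meet F l₂) (meet F m₁ ∪ meet F m₂)
  rw [meet_pencil_inter_meet_pencil hR hQR hn hl₁ hl₂ hm₁ hm₂ hl₁n hl₂n hm₁n hm₂n hA hB hC hD,
    card_insert_of_notMem hRI, ← hU] at this
  have := card_meet_union_meet_union_meet_add_two hQ hn.1 hl₁ hl₂ hl₁n.symm hl₂n.symm hl₁₂
  have := card_meet_union_meet_add_one hR hm₁ hm₂ hm₁₂
  omega

end Pencils

theorem exists_P_two_clean_6_secants_general (S : Set PGPoint) (hS : IsBlockingSemioval S) (hcard : S.ncard = 25)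
    (hmax : ∀ L : PGLine, (secantPts S L).ncard ≤ 6)
    (Q R : PGPoint) (hQ : Q ∈ S) (hR : R ∈ S) (hQR : Q ≠ R)
    (n l1 l2 m1 m2 : PGLine)
    (hn : PGmem Q n ∧ PGmem R n ∧ IsSecant S 6 n)
    (hl1 : PGmem Q l1 ∧ IsSecant S 6 l1) (hl2 : PGmem Q l2 ∧ IsSecant S 6 l2)
    (hm1 : PGmem R m1 ∧ IsSecant S 6 m1) (hm2 : PGmem R m2 ∧ IsSecant S 6 m2)
    (hl12 : l1 ≠ l2) (hl1n : l1 ≠ n) (hl2n : l2 ≠ n)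
    (hm12 : m1 ≠ m2) (hm1n : m1 ≠ n) (hm2n : m2 ≠ n)
    (A B C D : PGPoint)
    (hA : PGmem A l1 ∧ PGmem A m1) (hB : PGmem B l1 ∧ PGmem B m2)
    (hC : PGmem C l2 ∧ PGmem C m1) (hD : PGmem D l2 ∧ PGmem D m2)
    (I : Set PGPoint) (hI : I = {A, B, C, D})
    (Sstar : Set PGPoint)
    (hSstar : Sstar = {P ∈ S | PGmem P n ∨ PGmem P l1 ∨ PGmem P l2 ∨ PGmem P m1 ∨ PGmem P m2})
    (hI3 : (I ∩ S).ncard = 3) :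
    ∃ P ∈ S \ Sstar, ∃ t1 t2 : PGLine, t1 ≠ t2 ∧
      PGmem P t1 ∧ PGmem P t2 ∧ IsSecant S 6 t1 ∧ IsSecant S 6 t2 ∧
      (∀ X ∈ S \ Sstar, PGmem X t1 → X = P) ∧
      (∀ X ∈ S \ Sstar, PGmem X t2 → X = P) := by
  obtain ⟨⟨hblock, -⟩, hsemi⟩ := hS
  obtain ⟨F, rfl⟩ := S.toFinite.exists_finset_coe
  simp only [isSecant_coe_iff] at hn hl1 hl2 hm1 hm2
  simp only [secantPts_coe, Set.ncard_coe_finset, coe_nonempty, mem_coe] at hcard hmax hblock hQ hR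
  set U := ({n, l1, l2, m1, m2} : Finset PGLine).biUnion (meet F)
  have hSstarU : Sstar = ↑U := by
    ext X
    simp only [hSstar, U, biUnion_insert, singleton_biUnion, coe_union, Set.mem_union, mem_coe,
      mem_meet, Set.mem_ofPred_eq]
    tauto
  have hIF : #({A, B, C, D} ∩ F) = 3 := by
    rw [← Set.ncard_coe_finset, ← hI3, hI]
    push_cast
    rfl
  have hU := card_biUnion_meet_five_lines hQ hR hQR ⟨hn.1, hn.2.1⟩ hl1.1 hl2.1 hm1.1 hm2.1 hl12
    hl1n hl2n hm12 hm1n hm2n hA hB hC hD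
  obtain ⟨P, P', hPP', hout⟩ := card_eq_two.1 <| show #(F \ U) = 2 by
    rw [card_sdiff_of_subset (biUnion_subset.2 fun L _ => meet_subset F L)]
    omega
  have h9 := nine_le_card_six_secants hcard hblock hsemi hmax
  rw [hSstarU, ← coe_sdiff, hout]
  simp only [isSecant_coe_iff, mem_coe]
  exact exists_mem_pair_two_secants_missing_other (k := 6) hPP' hout
    (card_le_five.trans_lt (by norm_num)) (by grw [card_le_five]; omega)

theorem exists_P_two_clean_6_secants (S : Set PGPoint) (hS : IsBlockingSemioval S) (hcard : S.ncard = 25)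
    (hmax : ∀ L : PGLine, (secantPts S L).ncard ≤ 6)
    (Q R : PGPoint) (hQ : Q ∈ S) (hR : R ∈ S) (hQR : Q ≠ R)
    (hQ3 : ({L : PGLine | PGmem Q L ∧ IsSecant S 6 L}).ncard = 3)
    (hR3 : ({L : PGLine | PGmem R L ∧ IsSecant S 6 L}).ncard = 3)
    (n l1 l2 m1 m2 : PGLine)
    (hn : PGmem Q n ∧ PGmem R n ∧ IsSecant S 6 n)
    (hl1 : PGmem Q l1 ∧ IsSecant S 6 l1) (hl2 : PGmem Q l2 ∧ IsSecant S 6 l2)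
    (hm1 : PGmem R m1 ∧ IsSecant S 6 m1) (hm2 : PGmem R m2 ∧ IsSecant S 6 m2)
    (hl12 : l1 ≠ l2) (hl1n : l1 ≠ n) (hl2n : l2 ≠ n)
    (hm12 : m1 ≠ m2) (hm1n : m1 ≠ n) (hm2n : m2 ≠ n)
    (A B C D : PGPoint)
    (hA : PGmem A l1 ∧ PGmem A m1) (hB : PGmem B l1 ∧ PGmem B m2)
    (hC : PGmem C l2 ∧ PGmem C m1) (hD : PGmem D l2 ∧ PGmem D m2)
    (I : Set PGPoint) (hI : I = {A, B, C, D})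
    (Sstar : Set PGPoint)
    (hSstar : Sstar = {P ∈ S | PGmem P n ∨ PGmem P l1 ∨ PGmem P l2 ∨ PGmem P m1 ∨ PGmem P m2})
    (hI3 : (I ∩ S).ncard = 3) :
    ∃ P ∈ S \ Sstar, ∃ t1 t2 : PGLine, t1 ≠ t2 ∧
      PGmem P t1 ∧ PGmem P t2 ∧ IsSecant S 6 t1 ∧ IsSecant S 6 t2 ∧
      (∀ X ∈ S \ Sstar, PGmem X t1 → X = P) ∧
      (∀ X ∈ S \ Sstar, PGmem X t2 → X = P) :=
  exists_P_two_clean_6_secants_general S hS hcard hmax Q R hQ hR hQR n l1 l2 m1 m2 hn hl1 hl2 hm1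
    hm2 hl12 hl1n hl2n hm12 hm1n hm2n A B C D hA hB hC hD I hI Sstar hSstar hI3
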